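/- Let n ≥ 2 and let H be any subgroup of Dic_{4n} isomorphic to a dicyclic group (equivalently, any subgroup of Dic_{4n} containing an element of the form ba^i). Then (Dic_{4n}, H) is a strong Gelfand pair. In particular, every dicyclic subgroup Dic_{4k} ≤ Dic_{4n} is a strong Gelfand subgroup. -/

import Mathlib

open CategoryTheory

/-- `(G, H)` is a strong Gelfand pair: the restriction to `H` of every irreducible
complex representation of `G` is multiplicity-free, i.e. every irreducible
complex representation of `H` occurs in it with multiplicity at most one
(equivalently, by Frobenius reciprocity, every irreducible character of `H`
induces to a multiplicity-free character of `G`). -/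
def IsStrongGelfandPair (G : Type) [Group G] (H : Subgroup G) : Prop :=
  ∀ (V : FDRep ℂ G) (W : FDRep ℂ H), Simple V → Simple W →
    Module.finrank ℂ (W ⟶ (Action.res (FGModuleCat ℂ) H.subtype).obj V) ≤ 1

/-
Irreducible representations of `Dic_{4n}` have dimension at most two, since `⟨a⟩` is cyclic of
index two. For irreducible `W` of `H`, evaluation at a nonzero vector of `W` is injective on
`Hom_H(W, Res V)`; since `dim V ≤ 2`, multiplicity at least two makes it an isomorphism onto `V`.
Evaluating at an eigenvector of `b a^i ∈ H` then shows that `b a^i` acts on `V` as a scalar, so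
`ρ(Dic_{4n})` is generated by `ρ(a)` and scalars and is commutative, and Schur's lemma makes `V`
one-dimensional, a contradiction.
-/

open Module QuaternionGroup

namespace Representation.IsIrreducible

variable {k G V : Type*} [Field k] [Monoid G] [AddCommGroup V] [Module k V]

theorem nontrivial (ρ : Representation k G V) [ρ.IsIrreducible] : Nontrivial V := by
  by_contra hV
  rw [not_nontrivial_iff_subsingleton] at hV
  exact bot_ne_top (α := Subrepresentation ρ)
    (Subrepresentation.toSubmodule_injective (Subsingleton.elim _ _))

variable {ρ : Representation k G V} [ρ.IsIrreducible]

theorem eq_top_of_mem {p : Submodule k V} (hp : ∀ (g : G) ⦃v : V⦄, v ∈ p → ρ g v ∈ p)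
    {v : V} (hv : v ∈ p) (hv0 : v ≠ 0) : p = ⊤ := by
  have hne : (⟨p, hp⟩ : Subrepresentation ρ) ≠ ⊥ := fun h => by
    have hp : p = ⊥ := congrArg Subrepresentation.toSubmodule h
    exact hv0 ((Submodule.mem_bot k).mp (hp ▸ hv))
  exact congrArg Subrepresentation.toSubmodule (eq_bot_or_eq_top _ |>.resolve_left hne)

variable [FiniteDimensional k V] [IsAlgClosed k]

theorem exists_eq_smul_one_of_commute {T : Module.End k V} (hT : ∀ g, Commute T (ρ g)) :
    ∃ c : k, T = c • 1 := by
  have := nontrivial ρ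
  obtain ⟨c, hc⟩ := T.exists_eigenvalue
  obtain ⟨v, hv⟩ := hc.exists_hasEigenvector
  have htop : T.eigenspace c = ⊤ := by
    refine eq_top_of_mem (ρ := ρ) (fun g w hw => ?_) hv.1 hv.2
    rw [Module.End.mem_eigenspace_iff] at hw ⊢
    rw [← Module.End.mul_apply, (hT g).eq, Module.End.mul_apply, hw, map_smul]
  exact ⟨c, LinearMap.ext fun w => Module.End.mem_eigenspace_iff.mp (htop ▸ Submodule.mem_top)⟩

theorem finrank_eq_one_of_commute (h : ∀ g g', Commute (ρ g) (ρ g')) : finrank k V = 1 := by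
  have := nontrivial ρ
  obtain ⟨v, hv⟩ := exists_ne (0 : V)
  have htop : k ∙ v = ⊤ := by
    refine eq_top_of_mem (ρ := ρ) (fun g w hw => ?_) (Submodule.mem_span_singleton_self v) hv
    obtain ⟨c, hc⟩ := exists_eq_smul_one_of_commute (h g)
    simpa [hc] using Submodule.smul_mem _ c hw
  rw [← finrank_top, ← htop, finrank_span_singleton hv]

end Representation.IsIrreducible

namespace FDRep

variable {k G : Type*} [Field k] [Monoid G]

instance isIrreducible_ρ (V : FDRep k G) [Simple V] :
    Representation.IsIrreducible V.ρ := by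
  have : Nontrivial V := by
    by_contra hV
    rw [not_nontrivial_iff_subsingleton] at hV
    exact id_nonzero V (by ext; exact Subsingleton.elim _ _)
  refine { exists_pair_ne := ⟨⊥, ⊤, fun h => ?_⟩
           eq_bot_or_eq_top := fun σ => or_iff_not_imp_left.mpr fun hσ => ?_ }
  · exact bot_ne_top (congrArg Subrepresentation.toSubmodule h : (⊥ : Submodule k V) = ⊤)
  · let ι : FDRep.of σ.toRepresentation ⟶ V :=
      ⟨ConcreteCategory.ofHom σ.toSubmodule.subtype, fun g => by ext; rfl⟩
    have : Mono ι := ConcreteCategory.mono_of_injective ι Subtype.val_injective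
    have : ι ≠ 0 := fun h => hσ (Subrepresentation.toSubmodule_injective
      ((Submodule.eq_bot_iff _).mpr fun v hv => congr_arg (· ⟨v, hv⟩) h))
    have : IsIso ι := isIso_of_mono_of_nonzero this
    refine Subrepresentation.toSubmodule_injective (Submodule.eq_top_iff'.mpr fun v => ?_)
    obtain ⟨w, rfl⟩ := (ConcreteCategory.bijective_of_isIso ι).2 v
    exact w.2

theorem hom_comm_apply {W U : FDRep k G} (f : W ⟶ U) (g : G) (w : W) :
    f (W.ρ g w) = U.ρ g (f w) :=
  ConcreteCategory.congr_hom (f.comm g) w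

noncomputable def evalAt (W U : FDRep k G) (w : W) : (W ⟶ U) →ₗ[k] U where
  toFun f := f w
  map_add' _ _ := rfl
  map_smul' _ _ := rfl

theorem injective_evalAt {W U : FDRep k G} [Simple W] {w : W} (hw : w ≠ 0) :
    Function.Injective (evalAt W U w) := by
  rw [← LinearMap.ker_eq_bot, Submodule.eq_bot_iff]
  intro f hf
  have hker : LinearMap.ker (f.hom.hom.hom : W →ₗ[k] U) = ⊤ := by
    refine Representation.IsIrreducible.eq_top_of_mem (ρ := W.ρ) (fun g x hx => ?_) hf hw
    rw [LinearMap.mem_ker] at hx ⊢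
    exact (hom_comm_apply f g x).trans (by rw [show f x = 0 from hx, map_zero])
  ext x
  exact (LinearMap.mem_ker.mp (hker ▸ Submodule.mem_top : x ∈ _))

theorem finrank_hom_le_finrank {W U : FDRep k G} [Simple W] :
    finrank k (W ⟶ U) ≤ finrank k U := by
  have := Representation.IsIrreducible.nontrivial W.ρ
  obtain ⟨w, hw⟩ := exists_ne (0 : W)
  exact LinearMap.finrank_le_finrank_of_injective (injective_evalAt hw)

theorem exists_ρ_eq_smul_one_of_finrank_le [IsAlgClosed k] {W U : FDRep k G} [Simple W]
    (h : finrank k U ≤ finrank k (W ⟶ U)) (g : G) : ∃ c : k, U.ρ g = c • 1 := by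
  have := Representation.IsIrreducible.nontrivial W.ρ
  obtain ⟨c, hc⟩ := Module.End.exists_eigenvalue (W.ρ g)
  obtain ⟨w, hw⟩ := hc.exists_hasEigenvector
  have hsurj : Function.Surjective (evalAt W U w) :=
    (LinearMap.injective_iff_surjective_of_finrank_eq_finrank
      (le_antisymm finrank_hom_le_finrank h)).mp (injective_evalAt hw.2)
  refine ⟨c, LinearMap.ext fun u => ?_⟩
  obtain ⟨f, rfl⟩ := hsurj u
  calc U.ρ g (f w) = f (W.ρ g w) := (hom_comm_apply f g w).symm
    _ = c • f w := by rw [hw.apply_eq_smul]; exact map_smul f.hom.hom.hom c w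

end FDRep

namespace QuaternionGroup

variable {n : ℕ} {k V : Type*} [Field k] [AddCommGroup V] [Module k V]
  (ρ : Representation k (QuaternionGroup n) V)

theorem finrank_le_two_of_isIrreducible [NeZero n] [IsAlgClosed k] [FiniteDimensional k V]
    [ρ.IsIrreducible] : finrank k V ≤ 2 := by
  have := Representation.IsIrreducible.nontrivial ρ
  obtain ⟨μ, hμ⟩ := Module.End.exists_eigenvalue (ρ (a 1))
  obtain ⟨v, hv⟩ := hμ.exists_hasEigenvector
  set S := Submodule.span k (Set.range ![v, ρ (xa 0) v])
  have ha : ∀ j : ZMod (2 * n), ρ (a j) v = μ ^ j.val • v := fun j => by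
    rw [← ZMod.natCast_zmod_val j, ← a_one_pow, map_pow, ZMod.val_natCast_of_lt (ZMod.val_lt j)]
    exact hv.pow_apply j.val
  have hmem : ∀ g, ρ g v ∈ S := by
    rintro (j | j)
    · rw [ha j]
      exact S.smul_mem _ (Submodule.subset_span ⟨0, rfl⟩)
    · rw [← zero_add j, ← xa_mul_a, map_mul, Module.End.mul_apply, ha, map_smul]
      exact S.smul_mem _ (Submodule.subset_span ⟨1, rfl⟩)
  have hinv : ∀ g, Set.range ![v, ρ (xa 0) v] ⊆ S.comap (ρ g) := fun g => by
    rintro _ ⟨i, rfl⟩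
    fin_cases i
    · exact hmem g
    · simpa [← Module.End.mul_apply, ← map_mul] using hmem (g * xa 0)
  have hS : S = ⊤ := Representation.IsIrreducible.eq_top_of_mem (ρ := ρ)
    (fun g => Submodule.span_le.mpr (hinv g)) (Submodule.subset_span ⟨0, rfl⟩) hv.2
  calc finrank k V = finrank k S := by rw [hS, finrank_top]
    _ ≤ 2 := finrank_range_le_card _

theorem commute_of_xa_eq_smul_one {i : ZMod (2 * n)} {c : k} (hc : ρ (xa i) = c • 1) :
    ∀ g g', Commute (ρ g) (ρ g') := by
  have hform : ∀ g, ∃ (d : k) (j : ZMod (2 * n)), ρ g = d • ρ (a j) := by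
    rintro (j | j)
    · exact ⟨1, j, (one_smul _ _).symm⟩
    · refine ⟨c, j - i, ?_⟩
      rw [show xa j = xa i * a (j - i) by rw [xa_mul_a, add_sub_cancel], map_mul, hc,
        smul_one_mul]
  intro g g'
  obtain ⟨d, j, hd⟩ := hform g
  obtain ⟨d', j', hd'⟩ := hform g'
  have hcomm : Commute (ρ (a j)) (ρ (a j')) := by
    simp only [Commute, SemiconjBy, ← map_mul, a_mul_a, add_comm]
  rw [hd, hd']
  exact (hcomm.smul_left d).smul_right d'

end QuaternionGroup

/-- For `n ≥ 2`, every subgroup of `Dic_{4n}` isomorphic to a dicyclic group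
(equivalently, every subgroup containing an element of the form `b a^i`) is a
strong Gelfand subgroup of `Dic_{4n}`. -/
theorem isStrongGelfandPair_of_dicyclic_subgroup (n : ℕ) (hn : 2 ≤ n)
    (H : Subgroup (QuaternionGroup n))
    (hH : ∃ i : ZMod (2 * n), QuaternionGroup.xa i ∈ H) :
    IsStrongGelfandPair (QuaternionGroup n) H := by
  obtain ⟨i, hi⟩ := hH
  have : NeZero n := ⟨by omega⟩
  intro V W _ _
  set U := (Action.res (FGModuleCat ℂ) H.subtype).obj V
  have hUV : finrank ℂ U = finrank ℂ V := rfl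
  have hle : finrank ℂ (W ⟶ U) ≤ finrank ℂ U := FDRep.finrank_hom_le_finrank
  by_contra! hmult
  have hV2 : finrank ℂ V ≤ 2 := finrank_le_two_of_isIrreducible V.ρ
  obtain ⟨c, hc⟩ :=
    FDRep.exists_ρ_eq_smul_one_of_finrank_le (W := W) (U := U) (by omega) (⟨xa i, hi⟩ : H)
  have hV1 : finrank ℂ V = 1 :=
    Representation.IsIrreducible.finrank_eq_one_of_commute (commute_of_xa_eq_smul_one V.ρ hc)
  omega
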